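/- arXiv:1407.7077 — 4 statements merged into one kernel-verified Lean document; each statement's English description precedes it below -/
import Mathlib

section
/- Let (E_n) with 0 < E_1 < E_2 < ⋯, E_n → ∞, and c_n > 0 with Σ c_n E_n/(E_n²+1) < ∞. Define F(z) = Σ_n c_n (1/(E_n − z) − E_n/(E_n²+1)) for z ∉ {E_n}. Then on each open interval (E_j, E_{j+1}), F is strictly increasing, continuous, and takes every real value exactly once. -/
/-!
On a gap `(E j, E (j + 1))` every summand `c n * (1 / (E n - z) - E n / (E n ^ 2 + 1))` is strictly
increasing, and on a compact subinterval at distance `δ` from the `E n` it is bounded by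
`(c n + R * c n * E n) / (δ * (E n ^ 2 + 1))`, which is summable because `E n ≥ E 0 > 0`. So the
series is continuous and strictly increasing on the gap. Since all summands increase, comparing
with the value at an interior point `m` bounds `F z - F m` from above by the `j`-th summand's
increment for `z < m`, and from below by the `(j + 1)`-st summand's increment for `z > m`; these
summands have poles at the ends of the gap, so `F` runs from `-∞` to `+∞` and the intermediate
value theorem makes it a bijection onto `ℝ`.
-/

open Filter Topology Set

theorem existsUnique_eq_of_strictMonoOn_Ioo {α β : Type*} [ConditionallyCompleteLinearOrder α]
    [TopologicalSpace α] [OrderTopology α] [DenselyOrdered α] [LinearOrder β] [TopologicalSpace β]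
    [OrderClosedTopology β] {f : α → β} {a b : α} (hab : a < b) (hf : StrictMonoOn f (Ioo a b))
    (hcont : ContinuousOn f (Ioo a b)) (hbot : Tendsto f (𝓝[>] a) atBot)
    (htop : Tendsto f (𝓝[<] b) atTop) (y : β) : ∃! x, x ∈ Ioo a b ∧ f x = y := by
  obtain ⟨x, hx, rfl⟩ := hcont.surjOn_of_tendsto (nonempty_Ioo.2 hab)
    ((tendsto_comp_coe_Ioo_atBot hab).2 hbot) ((tendsto_comp_coe_Ioo_atTop hab).2 htop)
    (mem_univ y)
  exact ⟨x, ⟨hx, rfl⟩, fun x' hx' => hf.injOn hx'.1 hx hx'.2⟩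

section tsum

variable {ι α : Type*} [Preorder α] {f : ι → α → ℝ} {s : Set α}

theorem strictMonoOn_tsum [Nonempty ι] (hf : ∀ i, StrictMonoOn (f i) s)
    (hs : ∀ x ∈ s, Summable fun i => f i x) : StrictMonoOn (fun x => ∑' i, f i x) s :=
  fun x hx y hy hxy => (hs x hx).tsum_lt_tsum (fun i => (hf i hx hy hxy).le)
    (hf (Classical.arbitrary ι) hx hy hxy) (hs y hy)

theorem sub_le_tsum_sub_tsum (hf : ∀ i, MonotoneOn (f i) s) (hs : ∀ x ∈ s, Summable fun i => f i x)
    {x y : α} (hx : x ∈ s) (hy : y ∈ s) (hxy : x ≤ y) (k : ι) :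
    f k y - f k x ≤ ∑' i, f i y - ∑' i, f i x := by
  rw [← (hs y hy).tsum_sub (hs x hx)]
  exact ((hs y hy).sub (hs x hx)).le_tsum k fun i _ => sub_nonneg.2 (hf i hx hy hxy)

end tsum

noncomputable def resolventKernel (e z : ℝ) : ℝ := 1 / (e - z) - e / (e ^ 2 + 1)

namespace resolventKernel

theorem eq_div {e z : ℝ} (hez : e ≠ z) :
    resolventKernel e z = (1 + z * e) / ((e - z) * (e ^ 2 + 1)) := by
  have : e - z ≠ 0 := sub_ne_zero.2 hez
  unfold resolventKernel
  field_simp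
  ring

theorem abs_le {e z δ R : ℝ} (he : 0 ≤ e) (hδ : 0 < δ) (hz : δ ≤ |e - z|) (hR : |z| ≤ R) :
    |resolventKernel e z| ≤ (1 + R * e) / (δ * (e ^ 2 + 1)) := by
  have hez : e ≠ z := fun h => by simp [h] at hz; linarith
  rw [eq_div hez, abs_div, abs_mul, abs_of_pos (by positivity : (0 : ℝ) < e ^ 2 + 1)]
  have hR0 : 0 ≤ R := (abs_nonneg z).trans hR
  gcongr
  calc |1 + z * e| ≤ 1 + |z| * e := by
        simpa [abs_mul, abs_of_nonneg he] using abs_add_le 1 (z * e)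
    _ ≤ 1 + R * e := by gcongr

theorem strictMonoOn_Ioi (e : ℝ) : StrictMonoOn (resolventKernel e) (Ioi e) :=
  fun x hx y _ hxy => sub_lt_sub_right (one_div_lt_one_div_of_neg_of_lt (sub_neg.2 hx) (by linarith)) _

theorem strictMonoOn_Iio (e : ℝ) : StrictMonoOn (resolventKernel e) (Iio e) :=
  fun x _ y hy hxy => sub_lt_sub_right (one_div_lt_one_div_of_lt (sub_pos.2 hy) (by linarith)) _

theorem continuousOn {e : ℝ} {s : Set ℝ} (he : e ∉ s) : ContinuousOn (resolventKernel e) s :=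
  (continuousOn_const.div (continuousOn_const.sub continuousOn_id)
    fun z hz => sub_ne_zero.2 fun h : e = z => he (h ▸ hz)).sub continuousOn_const

theorem tendsto_nhdsGT (e : ℝ) : Tendsto (resolventKernel e) (𝓝[>] e) atBot := by
  have hsub : Tendsto (fun z => e - z) (𝓝[>] e) (𝓝[<] 0) := by
    refine tendsto_nhdsWithin_iff.2 ⟨?_, eventually_nhdsWithin_of_forall fun z (hz : e < z) =>
      show e - z < 0 from sub_neg.2 hz⟩
    simpa using ((continuous_sub_left e).tendsto e).mono_left nhdsWithin_le_nhds
  refine (tendsto_atBot_add_const_right _ (-(e / (e ^ 2 + 1)))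
    (tendsto_inv_nhdsLT_zero.comp hsub)).congr fun z => ?_
  simp [resolventKernel, sub_eq_add_neg]

theorem tendsto_nhdsLT (e : ℝ) : Tendsto (resolventKernel e) (𝓝[<] e) atTop := by
  have hsub : Tendsto (fun z => e - z) (𝓝[<] e) (𝓝[>] 0) := by
    refine tendsto_nhdsWithin_iff.2 ⟨?_, eventually_nhdsWithin_of_forall fun z (hz : z < e) =>
      show 0 < e - z from sub_pos.2 hz⟩
    simpa using ((continuous_sub_left e).tendsto e).mono_left nhdsWithin_le_nhds
  refine (tendsto_atTop_add_const_right _ (-(e / (e ^ 2 + 1)))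
    (tendsto_inv_nhdsGT_zero.comp hsub)).congr fun z => ?_
  simp [resolventKernel, sub_eq_add_neg]

end resolventKernel

/-- The function `F` of the statement, off `range E`. -/
noncomputable def resolventSum (E c : ℕ → ℝ) (z : ℝ) : ℝ := ∑' n, c n * resolventKernel (E n) z

theorem Monotone.apply_le_or_apply_succ_le {α : Type*} [Preorder α] {E : ℕ → α}
    (hE : Monotone E) (n j : ℕ) : E n ≤ E j ∨ E (j + 1) ≤ E n :=
  (le_or_gt n j).imp (@hE n j) (@hE (j + 1) n)

namespace resolventSum

variable {E c : ℕ → ℝ} {j : ℕ}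

theorem summable_div_sq_add_one (h0 : 0 < E 0) (hE : Monotone E) (hc : ∀ n, 0 ≤ c n)
    (hsum : Summable fun n => c n * E n / (E n ^ 2 + 1)) :
    Summable fun n => c n / (E n ^ 2 + 1) := by
  refine (hsum.div_const (E 0)).of_nonneg_of_le (fun n => by have := hc n; positivity)
    fun n => ?_
  rw [le_div_iff₀ h0, div_mul_eq_mul_div]
  have := hc n
  gcongr
  exact hE (Nat.zero_le n)

theorem exists_summable_bound (h0 : 0 < E 0) (hE : Monotone E) (hc : ∀ n, 0 ≤ c n)
    (hsum : Summable fun n => c n * E n / (E n ^ 2 + 1)) {a b : ℝ} (ha : E j < a)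
    (hb : b < E (j + 1)) :
    ∃ u : ℕ → ℝ, Summable u ∧ ∀ n, ∀ z ∈ Icc a b, ‖c n * resolventKernel (E n) z‖ ≤ u n := by
  -- `δ` is the distance from `[a, b]` to `range E`, and `R` bounds `|z|` on `[a, b]`.
  set δ := min (a - E j) (E (j + 1) - b)
  set R := max |a| |b|
  have hδ : 0 < δ := lt_min (sub_pos.2 ha) (sub_pos.2 hb)
  refine ⟨fun n => (c n / (E n ^ 2 + 1) + R * (c n * E n / (E n ^ 2 + 1))) / δ,
    ((summable_div_sq_add_one h0 hE hc hsum).add (hsum.mul_left R)).div_const δ,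
    fun n z hz => ?_⟩
  have hdist : δ ≤ |E n - z| := by
    rcases hE.apply_le_or_apply_succ_le n j with h | h
    · exact le_abs.2 (Or.inr (by linarith [min_le_left (a - E j) (E (j + 1) - b), hz.1]))
    · exact le_abs.2 (Or.inl (by linarith [min_le_right (a - E j) (E (j + 1) - b), hz.2]))
  have hkernel := resolventKernel.abs_le (h0.le.trans (hE (Nat.zero_le n))) hδ hdist
    (abs_le_max_abs_abs hz.1 hz.2)
  calc ‖c n * resolventKernel (E n) z‖ = c n * |resolventKernel (E n) z| := by
        rw [Real.norm_eq_abs, abs_mul, abs_of_nonneg (hc n)]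
    _ ≤ c n * ((1 + R * E n) / (δ * (E n ^ 2 + 1))) := by gcongr; exact hc n
    _ = (c n / (E n ^ 2 + 1) + R * (c n * E n / (E n ^ 2 + 1))) / δ := by
        field_simp

theorem summable_term (h0 : 0 < E 0) (hE : Monotone E) (hc : ∀ n, 0 ≤ c n)
    (hsum : Summable fun n => c n * E n / (E n ^ 2 + 1)) {z : ℝ}
    (hz : z ∈ Ioo (E j) (E (j + 1))) : Summable fun n => c n * resolventKernel (E n) z := by
  obtain ⟨u, hu, hbound⟩ := exists_summable_bound h0 hE hc hsum hz.1 hz.2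
  exact hu.of_norm_bounded fun n => hbound n z ⟨le_rfl, le_rfl⟩

theorem continuousOn (h0 : 0 < E 0) (hE : Monotone E) (hc : ∀ n, 0 ≤ c n)
    (hsum : Summable fun n => c n * E n / (E n ^ 2 + 1)) :
    ContinuousOn (resolventSum E c) (Ioo (E j) (E (j + 1))) := by
  intro x hx
  obtain ⟨a, ha, hax⟩ := exists_between hx.1
  obtain ⟨b, hxb, hb⟩ := exists_between hx.2
  obtain ⟨u, hu, hbound⟩ := exists_summable_bound h0 hE hc hsum ha hb
  have hIcc : ContinuousOn (resolventSum E c) (Icc a b) :=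
    continuousOn_tsum (fun n => continuousOn_const.mul (resolventKernel.continuousOn
      fun hn => hE.ne_of_lt_of_lt_nat j (ha.trans_le hn.1) (hn.2.trans_lt hb) n rfl)) hu hbound
  exact (hIcc.continuousAt (Icc_mem_nhds hax hxb)).continuousWithinAt

theorem strictMonoOn_term (hE : Monotone E) (hc : ∀ n, 0 < c n) (n : ℕ) :
    StrictMonoOn (fun z => c n * resolventKernel (E n) z) (Ioo (E j) (E (j + 1))) := by
  have hK : StrictMonoOn (resolventKernel (E n)) (Ioo (E j) (E (j + 1))) := by
    rcases hE.apply_le_or_apply_succ_le n j with h | h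
    · exact (resolventKernel.strictMonoOn_Ioi _).mono fun z hz => h.trans_lt hz.1
    · exact (resolventKernel.strictMonoOn_Iio _).mono fun z hz => hz.2.trans_le h
  exact fun x hx y hy hxy => mul_lt_mul_of_pos_left (hK hx hy hxy) (hc n)

theorem strictMonoOn (h0 : 0 < E 0) (hE : Monotone E) (hc : ∀ n, 0 < c n)
    (hsum : Summable fun n => c n * E n / (E n ^ 2 + 1)) :
    StrictMonoOn (resolventSum E c) (Ioo (E j) (E (j + 1))) :=
  strictMonoOn_tsum (strictMonoOn_term hE hc) fun _ hz =>
    summable_term h0 hE (fun n => (hc n).le) hsum hz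

theorem tendsto_nhdsGT (h0 : 0 < E 0) (hE : Monotone E) (hc : ∀ n, 0 < c n)
    (hsum : Summable fun n => c n * E n / (E n ^ 2 + 1)) (hj : E j < E (j + 1)) :
    Tendsto (resolventSum E c) (𝓝[>] E j) atBot := by
  obtain ⟨m, hm⟩ := exists_between hj
  refine tendsto_atBot_mono' _ ?_ (tendsto_atBot_add_const_right _
    (resolventSum E c m - c j * resolventKernel (E j) m)
    ((resolventKernel.tendsto_nhdsGT (E j)).const_mul_atBot (hc j)))
  filter_upwards [Ioo_mem_nhdsGT hm.1] with z hz
  have hincr := sub_le_tsum_sub_tsum (fun n => (strictMonoOn_term hE hc n).monotoneOn)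
    (fun _ hx => summable_term h0 hE (fun n => (hc n).le) hsum hx) ⟨hz.1, hz.2.trans hm.2⟩ hm
    hz.2.le j
  simp only [resolventSum]
  linarith

theorem tendsto_nhdsLT (h0 : 0 < E 0) (hE : Monotone E) (hc : ∀ n, 0 < c n)
    (hsum : Summable fun n => c n * E n / (E n ^ 2 + 1)) (hj : E j < E (j + 1)) :
    Tendsto (resolventSum E c) (𝓝[<] E (j + 1)) atTop := by
  obtain ⟨m, hm⟩ := exists_between hj
  refine tendsto_atTop_mono' _ ?_ (tendsto_atTop_add_const_right _
    (resolventSum E c m - c (j + 1) * resolventKernel (E (j + 1)) m)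
    ((resolventKernel.tendsto_nhdsLT (E (j + 1))).const_mul_atTop (hc (j + 1))))
  filter_upwards [Ioo_mem_nhdsLT hm.2] with z hz
  have hincr := sub_le_tsum_sub_tsum (fun n => (strictMonoOn_term hE hc n).monotoneOn)
    (fun _ hx => summable_term h0 hE (fun n => (hc n).le) hsum hx) hm ⟨hm.1.trans hz.1, hz.2⟩
    hz.1.le (j + 1)
  simp only [resolventSum]
  linarith

end resolventSum

theorem F_strictMono_continuous_bijective_on_gaps_general
    (E c : ℕ → ℝ) (hEpos : ∀ n, 0 < E n) (hEmono : StrictMono E)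
    (hc : ∀ n, 0 < c n)
    (hsum : Summable (fun n => c n * E n / (E n ^ 2 + 1)))
    (F : ℝ → ℝ)
    (hF : ∀ z, z ∉ Set.range E →
      F z = ∑' n, c n * (1 / (E n - z) - E n / (E n ^ 2 + 1))) :
    ∀ j : ℕ,
      StrictMonoOn F (Set.Ioo (E j) (E (j + 1))) ∧
      ContinuousOn F (Set.Ioo (E j) (E (j + 1))) ∧
      ∀ α : ℝ, ∃! z : ℝ, z ∈ Set.Ioo (E j) (E (j + 1)) ∧ F z = α := by
  intro j
  have hj : E j < E (j + 1) := hEmono (Nat.lt_succ_self j)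
  have hE := hEmono.monotone
  have hFeq : EqOn F (resolventSum E c) (Ioo (E j) (E (j + 1))) := fun z hz =>
    hF z fun ⟨n, hn⟩ => hE.ne_of_lt_of_lt_nat j hz.1 hz.2 n hn
  have hmono := (resolventSum.strictMonoOn (hEpos 0) hE hc hsum).congr hFeq.symm
  have hcont := (resolventSum.continuousOn (hEpos 0) hE (fun n => (hc n).le) hsum).congr hFeq
  refine ⟨hmono, hcont, existsUnique_eq_of_strictMonoOn_Ioo hj hmono hcont ?_ ?_⟩
  · exact (resolventSum.tendsto_nhdsGT (hEpos 0) hE hc hsum hj).congr'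
      (hFeq.eventuallyEq_of_mem (Ioo_mem_nhdsGT hj)).symm
  · exact (resolventSum.tendsto_nhdsLT (hEpos 0) hE hc hsum hj).congr'
      (hFeq.eventuallyEq_of_mem (Ioo_mem_nhdsLT hj)).symm

/-- On each spectral gap `(E_j, E_{j+1})`, `F` is strictly increasing,
continuous, and takes every real value exactly once. -/
theorem F_strictMono_continuous_bijective_on_gaps
    (E c : ℕ → ℝ) (hEpos : ∀ n, 0 < E n) (hEmono : StrictMono E)
    (hEtop : Tendsto E atTop atTop)
    (hc : ∀ n, 0 < c n)
    (hsum : Summable (fun n => c n * E n / (E n ^ 2 + 1)))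
    (F : ℝ → ℝ)
    (hF : ∀ z, z ∉ Set.range E →
      F z = ∑' n, c n * (1 / (E n - z) - E n / (E n ^ 2 + 1))) :
    ∀ j : ℕ,
      StrictMonoOn F (Set.Ioo (E j) (E (j + 1))) ∧
      ContinuousOn F (Set.Ioo (E j) (E (j + 1))) ∧
      ∀ α : ℝ, ∃! z : ℝ, z ∈ Set.Ioo (E j) (E (j + 1)) ∧ F z = α :=
  F_strictMono_continuous_bijective_on_gaps_general E c hEpos hEmono hc hsum F hF
end

section
/- For the rectangle of unit area with sides a = √E, b = 1/√E and irrational E, the sum Σ_{m,n ≥ 1} φ_{m,n}(x₀,y₀)² · E_{m,n}/(E_{m,n}²+1) converges, where E_{m,n} = π²(m²E + n²/E) and φ_{m,n} are the normalized Dirichlet eigenfunctions. -/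
open Real

set_option maxHeartbeats 4000000

/-- For the unit-area rectangle with sides `a = √E`, `b = 1/√E` and irrational
`E`, the sum `Σ_{m,n ≥ 1} φ_{m,n}(x₀,y₀)² / (E_{m,n}² + 1)` converges, where
`E_{m,n} = π²(m²E + n²/E)` and `φ_{m,n}(x,y) = 2 sin(mπx/a) sin(nπy/b)`. -/
theorem seba_weight_sum_summable
    (Ecc : ℝ) (hEcc : 0 < Ecc) (hirr : Irrational Ecc)
    (a b x₀ y₀ : ℝ) (ha : a = Real.sqrt Ecc) (hb : b = 1 / Real.sqrt Ecc)
    (hx₀ : x₀ ∈ Set.Ioo 0 a) (hy₀ : y₀ ∈ Set.Ioo 0 b)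
    (φ : ℕ → ℕ → ℝ)
    (hφ : ∀ m n : ℕ, φ m n =
      2 * Real.sin (((m : ℝ) + 1) * π * x₀ / a) * Real.sin (((n : ℝ) + 1) * π * y₀ / b))
    (Emn : ℕ → ℕ → ℝ)
    (hEmn : ∀ m n : ℕ, Emn m n =
      π ^ 2 * (((m : ℝ) + 1) ^ 2 * Ecc + ((n : ℝ) + 1) ^ 2 / Ecc)) :
    Summable (fun p : ℕ × ℕ => (φ p.1 p.2) ^ 2 / ((Emn p.1 p.2) ^ 2 + 1)) := by
  have hsum1 : Summable (fun m : ℕ => (1 : ℝ) / ((m : ℝ) + 1) ^ 2) := by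
    have := Real.summable_one_div_nat_rpow.mpr (by norm_num : (1:ℝ) < 2)
    have h2 : Summable (fun m : ℕ => (1 : ℝ) / (m : ℝ) ^ 2) := by
      simpa [Real.rpow_natCast] using
        Real.summable_one_div_nat_pow.mpr (by norm_num : 1 < 2)
    have := (summable_nat_add_iff 1).mpr h2
    simpa [add_comm] using this
  have hprod : Summable (fun p : ℕ × ℕ =>
      ((1 : ℝ) / ((p.1 : ℝ) + 1) ^ 2 / π ^ 4) * ((1 : ℝ) / ((p.2 : ℝ) + 1) ^ 2)) := by
    have h1 : (0:ℕ→ℝ) ≤ fun m : ℕ => (1 : ℝ) / ((m : ℝ) + 1) ^ 2 / π ^ 4 :=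
      fun m => by positivity
    have h2 : (0:ℕ→ℝ) ≤ fun m : ℕ => (1 : ℝ) / ((m : ℝ) + 1) ^ 2 := fun m => by positivity
    exact Summable.mul_of_nonneg (hsum1.div_const (π ^ 4)) hsum1 h1 h2
  apply Summable.of_nonneg_of_le _ _ hprod
  · intro p
    have h1 : (0:ℝ) < (Emn p.1 p.2) ^ 2 + 1 := by positivity
    positivity
  · intro ⟨m, n⟩
    have hm1 : (0:ℝ) < (m : ℝ) + 1 := by positivity
    have hn1 : (0:ℝ) < (n : ℝ) + 1 := by positivity
    have hπ := Real.pi_pos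
    -- φ² ≤ 4
    have hφb : (φ m n) ^ 2 ≤ 4 := by
      rw [hφ]
      have s1 := abs_sin_le_one (((m : ℝ) + 1) * π * x₀ / a)
      have s2 := abs_sin_le_one (((n : ℝ) + 1) * π * y₀ / b)
      have h1 : Real.sin (((m : ℝ) + 1) * π * x₀ / a) ^ 2 ≤ 1 := by
        rw [sq_le_one_iff_abs_le_one]; exact s1
      have h2 : Real.sin (((n : ℝ) + 1) * π * y₀ / b) ^ 2 ≤ 1 := by
        rw [sq_le_one_iff_abs_le_one]; exact s2
      have hnn1 : (0:ℝ) ≤ Real.sin (((m : ℝ) + 1) * π * x₀ / a) ^ 2 := sq_nonneg _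
      have hnn2 : (0:ℝ) ≤ Real.sin (((n : ℝ) + 1) * π * y₀ / b) ^ 2 := sq_nonneg _
      calc (2 * Real.sin (((m : ℝ) + 1) * π * x₀ / a) * Real.sin (((n : ℝ) + 1) * π * y₀ / b)) ^ 2
          = 4 * (Real.sin (((m : ℝ) + 1) * π * x₀ / a) ^ 2 *
              Real.sin (((n : ℝ) + 1) * π * y₀ / b) ^ 2) := by ring
        _ ≤ 4 * (1 * 1) := by
            apply mul_le_mul_of_nonneg_left _ (by norm_num)
            exact mul_le_mul h1 h2 hnn2 (by norm_num)
        _ = 4 := by norm_num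
    -- E² ≥ 4π⁴ (m+1)²(n+1)²
    have hE2 : 4 * π ^ 4 * ((m : ℝ) + 1) ^ 2 * ((n : ℝ) + 1) ^ 2 ≤ (Emn m n) ^ 2 := by
      rw [hEmn]
      have hAB : 4 * (((m : ℝ) + 1) ^ 2 * Ecc * (((n : ℝ) + 1) ^ 2 / Ecc)) ≤
          (((m : ℝ) + 1) ^ 2 * Ecc + ((n : ℝ) + 1) ^ 2 / Ecc) ^ 2 := by
        nlinarith [sq_nonneg (((m : ℝ) + 1) ^ 2 * Ecc - ((n : ℝ) + 1) ^ 2 / Ecc)]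
      have hAB' : ((m : ℝ) + 1) ^ 2 * Ecc * (((n : ℝ) + 1) ^ 2 / Ecc) =
          ((m : ℝ) + 1) ^ 2 * ((n : ℝ) + 1) ^ 2 := by
        field_simp
      rw [mul_pow]
      rw [hAB'] at hAB
      calc 4 * π ^ 4 * ((m : ℝ) + 1) ^ 2 * ((n : ℝ) + 1) ^ 2
          = π ^ 4 * (4 * (((m : ℝ) + 1) ^ 2 * ((n : ℝ) + 1) ^ 2)) := by ring
        _ ≤ π ^ 4 * ((((m : ℝ) + 1) ^ 2 * Ecc + ((n : ℝ) + 1) ^ 2 / Ecc) ^ 2) := by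
            apply mul_le_mul_of_nonneg_left _ (by positivity)
            simpa [mul_assoc] using hAB
        _ = (π ^ 2) ^ 2 * (((m : ℝ) + 1) ^ 2 * Ecc + ((n : ℝ) + 1) ^ 2 / Ecc) ^ 2 := by ring
    have hden : (0:ℝ) < (Emn m n) ^ 2 + 1 := by positivity
    have hden2 : (0:ℝ) < 4 * π ^ 4 * ((m : ℝ) + 1) ^ 2 * ((n : ℝ) + 1) ^ 2 := by positivity
    calc (φ m n) ^ 2 / ((Emn m n) ^ 2 + 1)
        ≤ 4 / ((Emn m n) ^ 2 + 1) := by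
          gcongr
      _ ≤ 4 / (4 * π ^ 4 * ((m : ℝ) + 1) ^ 2 * ((n : ℝ) + 1) ^ 2) := by
          apply div_le_div_of_nonneg_left (by norm_num) hden2
          linarith
      _ = (1 : ℝ) / ((m : ℝ) + 1) ^ 2 / π ^ 4 * ((1 : ℝ) / ((n : ℝ) + 1) ^ 2) := by
          field_simp
end

section
/- Let A be self-adjoint with simple discrete spectrum {E_n} (orthonormal eigenbasis φ_n), and suppose every a_n = φ_n(x₀) ≠ 0 and all E_n are distinct. Define for α ∈ ℝ the rank-one perturbed resolvent R_α(z) = (A−z)⁻¹ + (α − F(z))⁻¹ ⟨G_{\bar z}, ·⟩ G_z for z with F(z) ≠ α. Then R_α(z) satisfies the first resolvent identity R_α(z) − R_α(w) = (z − w) R_α(z) R_α(w) for real z, w ∉ {E_n} with F(z) ≠ α ≠ F(w). -/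
open Filter Topology
open scoped RealInnerProductSpace

/-!
In the eigenbasis `φ` everything is diagonal: `Res x` acts by `(E n - x)⁻¹` and `G x` has
coefficients `(E n - x)⁻¹ a n`. The scalar identity
`(e - z)⁻¹ - (e - w)⁻¹ = (z - w) (e - z)⁻¹ (e - w)⁻¹` therefore yields the resolvent identity for
`Res`, the relation `(z - w) Res z (G w) = G z - G w`, its transpose for `⟪G z, Res w ·⟫`
(`Res w` is symmetric), and, by Parseval, `F z - F w = (z - w) ⟪G z, G w⟫`; the regularising
terms `E n / (E n ^ 2 + 1)` cancel, and each series for `F` converges absolutely since its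
`n`-th term is bounded by `(1 + x²) ⟪φ n, G x⟫²`. Given these four relations, Krein's formula
for `R` satisfies the resolvent identity by a purely algebraic computation.
-/

section

open scoped InnerProductSpace ComplexConjugate

variable {ι 𝕜 E : Type*} [RCLike 𝕜] [NormedAddCommGroup E] [InnerProductSpace 𝕜 E]

theorem Orthonormal.inner_eq_of_hasSum {v : ι → E} (hv : Orthonormal 𝕜 v) {c : ι → 𝕜} {x : E}
    (h : HasSum (fun i => c i • v i) x) (j : ι) : ⟪v j, x⟫_𝕜 = c j := by
  classical
  refine (h.mapL (innerSL 𝕜 (v j))).unique ?_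
  convert hasSum_ite_eq j (c j) using 2 with i
  rw [innerSL_apply_apply, inner_smul_right, orthonormal_iff_ite.mp hv]
  split_ifs <;> simp_all [eq_comm]

namespace HilbertBasis

variable (b : HilbertBasis ι 𝕜 E)

theorem ext_inner {x y : E} (h : ∀ i, ⟪b i, x⟫_𝕜 = ⟪b i, y⟫_𝕜) : x = y :=
  (b.hasSum_repr x).unique (by simpa only [b.repr_apply_apply, h] using b.hasSum_repr y)

theorem inner_apply_of_apply_eq_smul {T : E →L[𝕜] E} {d : ι → 𝕜}
    (hT : ∀ i, T (b i) = d i • b i) (x : E) (j : ι) : ⟪b j, T x⟫_𝕜 = d j * ⟪b j, x⟫_𝕜 := by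
  refine b.orthonormal.inner_eq_of_hasSum (c := fun i => d i * ⟪b i, x⟫_𝕜) ?_ j
  simpa only [map_smul, hT, smul_smul, b.repr_apply_apply, mul_comm] using
    (b.hasSum_repr x).mapL T

theorem isSymmetric_of_apply_eq_smul {T : E →L[𝕜] E} {d : ι → 𝕜}
    (hT : ∀ i, T (b i) = d i • b i) (hd : ∀ i, conj (d i) = d i) :
    (T : E →ₗ[𝕜] E).IsSymmetric := by
  intro x y
  rw [← b.tsum_inner_mul_inner, ← b.tsum_inner_mul_inner]
  congr 1 with i
  simp only [ContinuousLinearMap.coe_coe]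
  rw [← inner_conj_symm,
    b.inner_apply_of_apply_eq_smul hT, b.inner_apply_of_apply_eq_smul hT, map_mul, hd,
    inner_conj_symm]
  ring

theorem smul_apply_eq_sub_of_inner_eq_inv_mul {T : E →L[𝕜] E} {e : ι → 𝕜} {z w : 𝕜}
    (hz : ∀ i, e i - z ≠ 0) (hw : ∀ i, e i - w ≠ 0) (hT : ∀ i, T (b i) = (e i - z)⁻¹ • b i)
    {s : ι → 𝕜} {uz uw : E} (huz : ∀ i, ⟪b i, uz⟫_𝕜 = (e i - z)⁻¹ * s i)
    (huw : ∀ i, ⟪b i, uw⟫_𝕜 = (e i - w)⁻¹ * s i) :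
    (z - w) • T uw = uz - uw := by
  refine b.ext_inner fun i => ?_
  rw [inner_smul_right, inner_sub_right, b.inner_apply_of_apply_eq_smul hT, huz, huw, ← sub_mul,
    inv_sub_inv' (hz i) (hw i), sub_sub_sub_cancel_left]
  ring

end HilbertBasis

end

theorem sub_ne_zero_of_notMem_range {ι : Type*} {E : ι → ℝ} {x : ℝ} (hx : x ∉ Set.range E)
    (n : ι) : E n - x ≠ 0 :=
  sub_ne_zero.mpr fun h => hx ⟨n, h⟩

theorem abs_inv_sub_sub_div_le {e x : ℝ} (h : e - x ≠ 0) :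
    |(e - x)⁻¹ - e / (e ^ 2 + 1)| ≤ (1 + x ^ 2) * ((e - x)⁻¹) ^ 2 := by
  have hden : 0 < e ^ 2 + 1 := by positivity
  have hsplit : (e - x)⁻¹ - e / (e ^ 2 + 1)
      = (1 + x * e) * (e - x) / (e ^ 2 + 1) * ((e - x)⁻¹) ^ 2 := by
    field_simp
    ring
  -- Lagrange's identity `(1 + x²)(e² + 1) = (1 + xe)² + (e - x)²`.
  have hnum : |(1 + x * e) * (e - x)| ≤ (1 + x ^ 2) * (e ^ 2 + 1) := by
    rw [abs_le]
    constructor <;> nlinarith [sq_nonneg (1 + x * e + (e - x)), sq_nonneg (1 + x * e - (e - x))]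
  rw [hsplit, abs_mul, abs_div, abs_of_pos hden, abs_sq]
  gcongr
  rwa [div_le_iff₀ hden]

section Resolvent

variable {ι H : Type*} [NormedAddCommGroup H] [InnerProductSpace ℝ H] (φ : HilbertBasis ι ℝ H)
  {E a : ι → ℝ}

theorem summable_sq_mul_inv_sub_sub_div {x : ℝ} (hx : x ∉ Set.range E) {g : H}
    (hg : ∀ n, ⟪φ n, g⟫ = (E n - x)⁻¹ * a n) :
    Summable fun n => a n ^ 2 * (1 / (E n - x) - E n / (E n ^ 2 + 1)) := by
  refine Summable.of_norm_bounded ((φ.summable_inner_mul_inner g g).mul_left (1 + x ^ 2))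
    fun n => ?_
  rw [Real.norm_eq_abs, abs_mul, abs_sq, one_div, real_inner_comm, hg]
  calc a n ^ 2 * |(E n - x)⁻¹ - E n / (E n ^ 2 + 1)|
      ≤ a n ^ 2 * ((1 + x ^ 2) * ((E n - x)⁻¹) ^ 2) := by
        gcongr
        exact abs_inv_sub_sub_div_le (sub_ne_zero_of_notMem_range hx n)
    _ = (1 + x ^ 2) * ((E n - x)⁻¹ * a n * ((E n - x)⁻¹ * a n)) := by ring

theorem tsum_sub_tsum_eq_sub_mul_inner {z w : ℝ} (hz : z ∉ Set.range E) (hw : w ∉ Set.range E)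
    {gz gw : H} (hgz : ∀ n, ⟪φ n, gz⟫ = (E n - z)⁻¹ * a n)
    (hgw : ∀ n, ⟪φ n, gw⟫ = (E n - w)⁻¹ * a n) :
    (∑' n, a n ^ 2 * (1 / (E n - z) - E n / (E n ^ 2 + 1)))
      - ∑' n, a n ^ 2 * (1 / (E n - w) - E n / (E n ^ 2 + 1)) = (z - w) * ⟪gz, gw⟫ := by
  rw [← (summable_sq_mul_inv_sub_sub_div φ hz hgz).tsum_sub
    (summable_sq_mul_inv_sub_sub_div φ hw hgw), ← φ.tsum_inner_mul_inner, ← tsum_mul_left]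
  congr 1 with n
  rw [real_inner_comm, hgz, hgw]
  field_simp [sub_ne_zero_of_notMem_range hz n, sub_ne_zero_of_notMem_range hw n]
  ring

theorem sub_mul_inner_apply_eq {z w : ℝ} (hz : z ∉ Set.range E) (hw : w ∉ Set.range E)
    {T : H →L[ℝ] H} (hT : ∀ n, T (φ n) = (E n - w)⁻¹ • φ n)
    {gz gw : H} (hgz : ∀ n, ⟪φ n, gz⟫ = (E n - z)⁻¹ * a n)
    (hgw : ∀ n, ⟪φ n, gw⟫ = (E n - w)⁻¹ * a n) (f : H) :
    (z - w) * ⟪gz, T f⟫ = ⟪gz, f⟫ - ⟪gw, f⟫ := by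
  have hsymm := φ.isSymmetric_of_apply_eq_smul hT fun n => conj_trivial _
  have hswap : (w - z) • T gz = gw - gz :=
    φ.smul_apply_eq_sub_of_inner_eq_inv_mul (sub_ne_zero_of_notMem_range hw)
      (sub_ne_zero_of_notMem_range hz) hT hgw hgz
  calc (z - w) * ⟪gz, T f⟫ = -⟪(w - z) • T gz, f⟫ := by
        rw [real_inner_smul_left, ← ContinuousLinearMap.coe_coe, ← hsymm]
        ring
    _ = ⟪gz, f⟫ - ⟪gw, f⟫ := by
        rw [hswap, inner_sub_left]
        ring

end Resolvent

theorem rankOne_perturbation_resolvent_sub {K V : Type*} [Field K] [AddCommGroup V] [Module K V]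
    {Tz Tw : V →ₗ[K] V} {ℓz ℓw : Module.Dual K V} {gz gw : V} {Rz Rw : V → V}
    {z w α Fz Fw : K} (hFz : Fz ≠ α) (hFw : Fw ≠ α)
    (hRz : ∀ f, Rz f = Tz f + ((α - Fz)⁻¹ * ℓz f) • gz)
    (hRw : ∀ f, Rw f = Tw f + ((α - Fw)⁻¹ * ℓw f) • gw)
    (hT : ∀ f, (z - w) • Tz (Tw f) = Tz f - Tw f)
    (hg : (z - w) • Tz gw = gz - gw)
    (hℓ : ∀ f, (z - w) * ℓz (Tw f) = ℓz f - ℓw f)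
    (hF : Fz - Fw = (z - w) * ℓz gw) (f : V) :
    Rz f - Rw f = (z - w) • Rz (Rw f) := by
  have hαz : α - Fz ≠ 0 := sub_ne_zero.mpr hFz.symm
  have hαw : α - Fw ≠ 0 := sub_ne_zero.mpr hFw.symm
  have hinv : (α - Fz)⁻¹ - (α - Fw)⁻¹ = (α - Fz)⁻¹ * (Fz - Fw) * (α - Fw)⁻¹ := by
    rw [inv_sub_inv' hαz hαw, sub_sub_sub_cancel_left]
  calc Rz f - Rw f
      = (Tz f - Tw f) + ((α - Fw)⁻¹ * ℓw f) • (gz - gw)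
          + ((α - Fz)⁻¹ * ((ℓz f - ℓw f) + (α - Fw)⁻¹ * ℓw f * (Fz - Fw))) • gz := by
        rw [hRz, hRw]
        match_scalars
        · ring
        · linear_combination ℓw f * hinv
        · ring
        · ring
    _ = (z - w) • Rz (Rw f) := by
        rw [← hT, ← hg, ← hℓ, hF, hRz, hRw, map_add, map_smul, map_add, map_smul]
        match_scalars <;> ring

theorem perturbed_resolvent_identity_general
    (H : Type*) [NormedAddCommGroup H] [InnerProductSpace ℝ H]
    (φ : HilbertBasis ℕ ℝ H)
    (E a : ℕ → ℝ)
    (F : ℝ → ℝ)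
    (hF : ∀ x, x ∉ Set.range E →
      F x = ∑' n, a n ^ 2 * (1 / (E n - x) - E n / (E n ^ 2 + 1)))
    (G : ℝ → H)
    (hG : ∀ x, x ∉ Set.range E →
      HasSum (fun n => (a n / (E n - x)) • (φ n : H)) (G x))
    (Res : ℝ → H →L[ℝ] H)
    (hRes : ∀ x, x ∉ Set.range E → ∀ n, Res x (φ n) = (E n - x)⁻¹ • (φ n : H))
    (α : ℝ) (R : ℝ → H →L[ℝ] H)
    (hR : ∀ x, x ∉ Set.range E → F x ≠ α →
      ∀ f : H, R x f = Res x f + ((α - F x)⁻¹ * ⟪G x, f⟫) • G x)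
    (z w : ℝ) (hz : z ∉ Set.range E) (hw : w ∉ Set.range E)
    (hFz : F z ≠ α) (hFw : F w ≠ α) :
    R z - R w = (z - w) • (R z ∘L R w) := by
  have hGcoeff : ∀ x, x ∉ Set.range E → ∀ n, ⟪φ n, G x⟫ = (E n - x)⁻¹ * a n := fun x hx n => by
    rw [inv_mul_eq_div]
    exact φ.orthonormal.inner_eq_of_hasSum (hG x hx) n
  have hResCoeff : ∀ x, x ∉ Set.range E → ∀ f n, ⟪φ n, Res x f⟫ = (E n - x)⁻¹ * ⟪φ n, f⟫ :=
    fun x hx => φ.inner_apply_of_apply_eq_smul (hRes x hx)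
  have hzE := sub_ne_zero_of_notMem_range hz
  have hwE := sub_ne_zero_of_notMem_range hw
  ext f
  refine rankOne_perturbation_resolvent_sub (Tz := Res z) (Tw := Res w)
    (ℓz := innerSL ℝ (G z)) (ℓw := innerSL ℝ (G w)) hFz hFw (hR z hz hFz) (hR w hw hFw)
    (fun f => φ.smul_apply_eq_sub_of_inner_eq_inv_mul hzE hwE (hRes z hz) (hResCoeff z hz f)
      (hResCoeff w hw f))
    (φ.smul_apply_eq_sub_of_inner_eq_inv_mul hzE hwE (hRes z hz) (hGcoeff z hz) (hGcoeff w hw))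
    (sub_mul_inner_apply_eq φ hz hw (hRes w hw) (hGcoeff z hz) (hGcoeff w hw))
    ?_ f
  rw [hF z hz, hF w hw]
  exact tsum_sub_tsum_eq_sub_mul_inner φ hz hw (hGcoeff z hz) (hGcoeff w hw)

/-- The rank-one perturbed resolvent
`R_α(z) = (A−z)⁻¹ + (α − F(z))⁻¹ ⟨G_z, ·⟩ G_z` satisfies the first resolvent
identity `R_α(z) − R_α(w) = (z − w) R_α(z) R_α(w)`. -/
theorem perturbed_resolvent_identity
    (H : Type*) [NormedAddCommGroup H] [InnerProductSpace ℝ H] [CompleteSpace H]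
    (φ : HilbertBasis ℕ ℝ H)
    (E a : ℕ → ℝ) (hEpos : ∀ n, 0 < E n) (hEinj : Function.Injective E)
    (hEtop : Tendsto E atTop atTop)
    (ha : ∀ n, a n ≠ 0)
    (hsum : Summable (fun n => a n ^ 2 * E n / (E n ^ 2 + 1)))
    (F : ℝ → ℝ)
    (hF : ∀ x, x ∉ Set.range E →
      F x = ∑' n, a n ^ 2 * (1 / (E n - x) - E n / (E n ^ 2 + 1)))
    (G : ℝ → H)
    (hG : ∀ x, x ∉ Set.range E →
      HasSum (fun n => (a n / (E n - x)) • (φ n : H)) (G x))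
    (Res : ℝ → H →L[ℝ] H)
    (hRes : ∀ x, x ∉ Set.range E → ∀ n, Res x (φ n) = (E n - x)⁻¹ • (φ n : H))
    (α : ℝ) (R : ℝ → H →L[ℝ] H)
    (hR : ∀ x, x ∉ Set.range E → F x ≠ α →
      ∀ f : H, R x f = Res x f + ((α - F x)⁻¹ * ⟪G x, f⟫) • G x)
    (z w : ℝ) (hz : z ∉ Set.range E) (hw : w ∉ Set.range E)
    (hFz : F z ≠ α) (hFw : F w ≠ α) :
    R z - R w = (z - w) • (R z ∘L R w) :=
  perturbed_resolvent_identity_general H φ E a F hF G hG Res hRes α R hR z w hz hw hFz hFw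
end

section
/- In the rank-one perturbation setting, if z ∉ {E_n} satisfies F(z) = α, then the vector G_z = Σ_n (a_n/(E_n − z))φ_n satisfies: for every w ∉ {E_n} with F(w) ≠ α, R_α(w) G_z = (z − w)⁻¹ G_z; i.e., G_z is an eigenvector of the perturbed resolvent with eigenvalue (z − w)⁻¹, so z is a simple eigenvalue of the point scatterer. -/
/-!
Expanding in the eigenbasis, the first resolvent identity
`(E - w)⁻¹ (E - z)⁻¹ = (z - w)⁻¹ ((E - z)⁻¹ - (E - w)⁻¹)` gives both
`(A - w)⁻¹ G_z = (z - w)⁻¹ (G_z - G_w)` and `F(z) - F(w) = (z - w) ⟪G_w, G_z⟫`.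
When `F(z) = α` the rank-one term of `R_α(w) G_z` is therefore `(z - w)⁻¹ G_w`,
which cancels the `G_w` coming from the free resolvent.
-/

open Filter Topology
open scoped RealInnerProductSpace

namespace HilbertBasis

variable {ι H : Type*} [NormedAddCommGroup H] [InnerProductSpace ℝ H] (φ : HilbertBasis ι ℝ H)
  {c d : ι → ℝ} {x y : H}

theorem inner_eq_of_hasSum (hx : HasSum (fun i => c i • φ i) x) (i : ι) : ⟪φ i, x⟫ = c i := by
  classical
  have h := hx.mapL (innerSL ℝ (φ i))
  simp only [innerSL_apply_apply, inner_smul_right, orthonormal_iff_ite.mp φ.orthonormal,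
    mul_boole] at h
  simpa using h.unique (hasSum_single i fun j hj => if_neg (Ne.symm hj))

theorem hasSum_mul_of_hasSum (hx : HasSum (fun i => c i • φ i) x)
    (hy : HasSum (fun i => d i • φ i) y) : HasSum (fun i => c i * d i) ⟪x, y⟫ := by
  have hcx : ∀ i, ⟪x, φ i⟫ = c i := fun i => by rw [real_inner_comm, φ.inner_eq_of_hasSum hx]
  simpa only [hcx, φ.inner_eq_of_hasSum hy] using φ.hasSum_inner_mul_inner x y

theorem summable_sq_of_hasSum (hx : HasSum (fun i => c i • φ i) x) :
    Summable (fun i => c i ^ 2) := by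
  simpa only [sq] using (φ.hasSum_mul_of_hasSum hx hx).summable

end HilbertBasis

theorem ContinuousLinearMap.hasSum_of_apply_eq_smul {ι H : Type*} [NormedAddCommGroup H]
    [InnerProductSpace ℝ H] {φ : ι → H} {c μ : ι → ℝ} {x : H} (T : H →L[ℝ] H)
    (hT : ∀ i, T (φ i) = μ i • φ i) (hx : HasSum (fun i => c i • φ i) x) :
    HasSum (fun i => (μ i * c i) • φ i) (T x) := by
  simpa only [map_smul, hT, smul_smul, mul_comm] using hx.mapL T

-- From the identity `(1 + x E) ^ 2 + (E - x) ^ 2 = (1 + x ^ 2) (E ^ 2 + 1)`.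
theorem two_mul_abs_mul_le_one_add_sq_mul (E x : ℝ) :
    2 * (|1 + x * E| * |E - x|) ≤ (1 + x ^ 2) * (E ^ 2 + 1) := by
  nlinarith [two_mul_le_add_sq |1 + x * E| |E - x|, sq_abs (1 + x * E), sq_abs (E - x)]

theorem abs_sq_mul_inv_sub_sub_le {E x : ℝ} (a : ℝ) (hE : E ≠ x) :
    |a ^ 2 * (1 / (E - x) - E / (E ^ 2 + 1))| ≤ (1 + x ^ 2) / 2 * (a / (E - x)) ^ 2 := by
  have hd : E - x ≠ 0 := sub_ne_zero.mpr hE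
  have hrepr : 1 / (E - x) - E / (E ^ 2 + 1)
      = (1 + x * E) * (E - x) / ((E - x) ^ 2 * (E ^ 2 + 1)) := by
    field_simp
    ring
  rw [hrepr, abs_mul, abs_of_nonneg (sq_nonneg a), abs_div, abs_mul,
    abs_of_pos (by positivity : (0 : ℝ) < (E - x) ^ 2 * (E ^ 2 + 1)), div_pow,
    mul_div_assoc', div_le_iff₀ (by positivity)]
  have := two_mul_abs_mul_le_one_add_sq_mul E x
  field_simp
  nlinarith [sq_nonneg a, sq_nonneg (E - x)]

section PointScatterer

variable {ι H : Type*} [NormedAddCommGroup H] [InnerProductSpace ℝ H] {E a : ι → ℝ} {z w : ℝ}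
  {gz gw : H}

theorem ContinuousLinearMap.apply_eq_of_hasSum_resolvent {φ : ι → H} {T : H →L[ℝ] H}
    (hT : ∀ i, T (φ i) = (E i - w)⁻¹ • φ i) (hEz : ∀ i, E i ≠ z) (hEw : ∀ i, E i ≠ w)
    (hzw : z ≠ w) (hgz : HasSum (fun i => (a i / (E i - z)) • φ i) gz)
    (hgw : HasSum (fun i => (a i / (E i - w)) • φ i) gw) :
    T gz = (z - w)⁻¹ • (gz - gw) := by
  refine (T.hasSum_of_apply_eq_smul hT hgz).unique ?_
  convert (hgz.sub hgw).const_smul (z - w)⁻¹ using 1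
  ext i
  have := sub_ne_zero.mpr (hEz i)
  have := sub_ne_zero.mpr (hEw i)
  have := sub_ne_zero.mpr hzw
  rw [← sub_smul, smul_smul]
  congr 1
  field_simp
  ring

theorem summable_sq_mul_inv_sub_sub {x : ℝ} (hE : ∀ i, E i ≠ x)
    (h : Summable fun i => (a i / (E i - x)) ^ 2) :
    Summable fun i => a i ^ 2 * (1 / (E i - x) - E i / (E i ^ 2 + 1)) :=
  (h.mul_left _).of_norm_bounded fun i => abs_sq_mul_inv_sub_sub_le (a i) (hE i)

theorem HilbertBasis.tsum_sub_tsum_eq_mul_inner (φ : HilbertBasis ι ℝ H) (hEz : ∀ i, E i ≠ z)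
    (hEw : ∀ i, E i ≠ w) (hgz : HasSum (fun i => (a i / (E i - z)) • φ i) gz)
    (hgw : HasSum (fun i => (a i / (E i - w)) • φ i) gw) :
    ∑' i, a i ^ 2 * (1 / (E i - z) - E i / (E i ^ 2 + 1))
      - ∑' i, a i ^ 2 * (1 / (E i - w) - E i / (E i ^ 2 + 1)) = (z - w) * ⟪gw, gz⟫ := by
  rw [← (summable_sq_mul_inv_sub_sub hEz (φ.summable_sq_of_hasSum hgz)).tsum_sub
    (summable_sq_mul_inv_sub_sub hEw (φ.summable_sq_of_hasSum hgw)),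
    ← ((φ.hasSum_mul_of_hasSum hgw hgz).mul_left (z - w)).tsum_eq]
  congr 1
  ext i
  have := sub_ne_zero.mpr (hEz i)
  have := sub_ne_zero.mpr (hEw i)
  field_simp
  ring

end PointScatterer

theorem greens_vector_is_eigenvector_of_perturbed_resolvent_general
    (H : Type*) [NormedAddCommGroup H] [InnerProductSpace ℝ H]
    (φ : HilbertBasis ℕ ℝ H)
    (E a : ℕ → ℝ)
    (F : ℝ → ℝ)
    (hF : ∀ x, x ∉ Set.range E →
      F x = ∑' n, a n ^ 2 * (1 / (E n - x) - E n / (E n ^ 2 + 1)))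
    (G : ℝ → H)
    (hG : ∀ x, x ∉ Set.range E →
      HasSum (fun n => (a n / (E n - x)) • (φ n : H)) (G x))
    (Res : ℝ → H →L[ℝ] H)
    (hRes : ∀ x, x ∉ Set.range E → ∀ n, Res x (φ n) = (E n - x)⁻¹ • (φ n : H))
    (α : ℝ) (R : ℝ → H →L[ℝ] H)
    (hR : ∀ x, x ∉ Set.range E → F x ≠ α →
      ∀ f : H, R x f = Res x f + ((α - F x)⁻¹ * ⟪G x, f⟫) • G x)
    (z : ℝ) (hz : z ∉ Set.range E) (hFz : F z = α)
    (w : ℝ) (hw : w ∉ Set.range E) (hFw : F w ≠ α) :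
    R w (G z) = (z - w)⁻¹ • G z := by
  have hEz : ∀ n, E n ≠ z := fun n h => hz ⟨n, h⟩
  have hEw : ∀ n, E n ≠ w := fun n h => hw ⟨n, h⟩
  have hzw : z ≠ w := by
    rintro rfl
    exact hFw hFz
  have hResGz : Res w (G z) = (z - w)⁻¹ • (G z - G w) :=
    (Res w).apply_eq_of_hasSum_resolvent (hRes w hw) hEz hEw hzw (hG z hz) (hG w hw)
  have hinner : (α - F w) * (z - w)⁻¹ = ⟪G w, G z⟫ := by
    rw [← hFz, hF z hz, hF w hw, φ.tsum_sub_tsum_eq_mul_inner hEz hEw (hG z hz) (hG w hw)]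
    field_simp [sub_ne_zero.mpr hzw]
  rw [hR w hw hFw, hResGz, ← hinner, inv_mul_cancel_left₀ (sub_ne_zero.mpr hFw.symm), smul_sub]
  abel

/-- If `F(z) = α` then the Green's vector `G_z` is an eigenvector of the
perturbed resolvent `R_α(w)` with eigenvalue `(z − w)⁻¹`, so `z` is an
eigenvalue of the point scatterer. -/
theorem greens_vector_is_eigenvector_of_perturbed_resolvent
    (H : Type*) [NormedAddCommGroup H] [InnerProductSpace ℝ H] [CompleteSpace H]
    (φ : HilbertBasis ℕ ℝ H)
    (E a : ℕ → ℝ) (hEpos : ∀ n, 0 < E n) (hEinj : Function.Injective E)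
    (hEtop : Tendsto E atTop atTop)
    (ha : ∀ n, a n ≠ 0)
    (hsum : Summable (fun n => a n ^ 2 * E n / (E n ^ 2 + 1)))
    (F : ℝ → ℝ)
    (hF : ∀ x, x ∉ Set.range E →
      F x = ∑' n, a n ^ 2 * (1 / (E n - x) - E n / (E n ^ 2 + 1)))
    (G : ℝ → H)
    (hG : ∀ x, x ∉ Set.range E →
      HasSum (fun n => (a n / (E n - x)) • (φ n : H)) (G x))
    (Res : ℝ → H →L[ℝ] H)
    (hRes : ∀ x, x ∉ Set.range E → ∀ n, Res x (φ n) = (E n - x)⁻¹ • (φ n : H))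
    (α : ℝ) (R : ℝ → H →L[ℝ] H)
    (hR : ∀ x, x ∉ Set.range E → F x ≠ α →
      ∀ f : H, R x f = Res x f + ((α - F x)⁻¹ * ⟪G x, f⟫) • G x)
    (z : ℝ) (hz : z ∉ Set.range E) (hFz : F z = α)
    (w : ℝ) (hw : w ∉ Set.range E) (hFw : F w ≠ α) (hzw : z ≠ w) :
    R w (G z) = (z - w)⁻¹ • G z :=
  greens_vector_is_eigenvector_of_perturbed_resolvent_general H φ E a F hF G hG Res hRes α R hR z hz
    hFz w hw hFw
end
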